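/- For every smooth function f : ℝ^d → ℝ, writing u = (γ/π)·f, one has the pointwise conjugation (ground-state transform) identity: −(1/2)Δf(y) − ∇A(y)·∇f(y) + κ̃(y)·f(y) = (π(y)/γ(y)) · ( −(1/2)Δu(y) − (1/2)∇log(π²/γ)(y)·∇u(y) ) for every y ∈ ℝ^d. In words, the formal killed generator L̃^κ̃ = −(1/2)Δ − ∇A·∇ + κ̃ equals U⁻¹ L̃^Z U, where U is multiplication by γ/π and −L̃^Z is the formal generator of the Langevin diffusion targeting π²/γ. -/

import Mathlib

open MeasureTheory
open scoped BigOperators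

/-- Partial derivative of `f` in the `i`-th coordinate direction. -/
noncomputable def pd {d : ℕ} (f : EuclideanSpace ℝ (Fin d) → ℝ) (i : Fin d)
    (y : EuclideanSpace ℝ (Fin d)) : ℝ :=
  fderiv ℝ f y (EuclideanSpace.single i 1)

/-- Laplacian: sum of second partial derivatives. -/
noncomputable def lap {d : ℕ} (f : EuclideanSpace ℝ (Fin d) → ℝ)
    (y : EuclideanSpace ℝ (Fin d)) : ℝ :=
  ∑ i, pd (pd f i) i y

/-- Euclidean dot product of gradients, `∇f · ∇g`. -/
noncomputable def gdot {d : ℕ} (f g : EuclideanSpace ℝ (Fin d) → ℝ)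
    (y : EuclideanSpace ℝ (Fin d)) : ℝ :=
  ∑ i, pd f i y * pd g i y


section helpers
variable {d : ℕ} {a b : EuclideanSpace ℝ (Fin d) → ℝ} {y : EuclideanSpace ℝ (Fin d)} {i : Fin d}

lemma contDiff_pd (hf : ContDiff ℝ (⊤ : ℕ∞) a) (i : Fin d) : ContDiff ℝ (⊤ : ℕ∞) (pd a i) := by
  have h1 : ContDiff ℝ (⊤ : ℕ∞) (fderiv ℝ a) := hf.fderiv_right (by simp)
  exact (ContinuousLinearMap.apply ℝ ℝ (EuclideanSpace.single i 1)).contDiff.comp h1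

lemma pd_add (ha : DifferentiableAt ℝ a y) (hb : DifferentiableAt ℝ b y) :
    pd (fun z => a z + b z) i y = pd a i y + pd b i y := by
  unfold pd; rw [fderiv_fun_add ha hb]; simp

lemma pd_sub (ha : DifferentiableAt ℝ a y) (hb : DifferentiableAt ℝ b y) :
    pd (fun z => a z - b z) i y = pd a i y - pd b i y := by
  unfold pd; rw [fderiv_fun_sub ha hb]; simp

lemma pd_mul (ha : DifferentiableAt ℝ a y) (hb : DifferentiableAt ℝ b y) :
    pd (fun z => a z * b z) i y = pd a i y * b y + a y * pd b i y := by
  unfold pd; rw [fderiv_fun_mul ha hb]; simp; ring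

lemma pd_const_mul (c : ℝ) (ha : DifferentiableAt ℝ a y) :
    pd (fun z => c * a z) i y = c * pd a i y := by
  unfold pd; rw [fderiv_const_mul ha]; simp

lemma pd_inv (hb : DifferentiableAt ℝ b y) (h : b y ≠ 0) :
    pd (fun z => (b z)⁻¹) i y = -(pd b i y) / (b y)^2 := by
  unfold pd
  have h2 : HasFDerivAt (fun z => (b z)⁻¹) (-((b y)^2)⁻¹ • fderiv ℝ b y) y :=
    (hasDerivAt_inv h).comp_hasFDerivAt y hb.hasFDerivAt
  rw [h2.fderiv]; simp; ring

lemma diffAt_div (ha : DifferentiableAt ℝ a y) (hb : DifferentiableAt ℝ b y) (h : b y ≠ 0) :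
    DifferentiableAt ℝ (fun z => a z / b z) y := by
  have e : (fun z => a z / b z) = fun z => a z * (b z)⁻¹ := funext fun z => div_eq_mul_inv _ _
  rw [e]; exact ha.mul (hb.inv h)

lemma pd_div (ha : DifferentiableAt ℝ a y) (hb : DifferentiableAt ℝ b y) (h : b y ≠ 0) :
    pd (fun z => a z / b z) i y = (pd a i y * b y - a y * pd b i y) / (b y)^2 := by
  have e : (fun z => a z / b z) = fun z => a z * (b z)⁻¹ := by
    funext z; rw [div_eq_mul_inv]
  rw [e, pd_mul (b := fun z => (b z)⁻¹) ha (hb.inv h), pd_inv hb h]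
  field_simp
  ring

lemma pd_exp (ha : DifferentiableAt ℝ a y) :
    pd (fun z => Real.exp (a z)) i y = Real.exp (a y) * pd a i y := by
  unfold pd
  have h2 : HasFDerivAt (fun z => Real.exp (a z)) (Real.exp (a y) • fderiv ℝ a y) y :=
    (Real.hasDerivAt_exp (a y)).comp_hasFDerivAt y ha.hasFDerivAt
  rw [h2.fderiv]; simp

lemma pd_log (ha : DifferentiableAt ℝ a y) (h : a y ≠ 0) :
    pd (fun z => Real.log (a z)) i y = (a y)⁻¹ * pd a i y := by
  unfold pd
  have h2 : HasFDerivAt (fun z => Real.log (a z)) ((a y)⁻¹ • fderiv ℝ a y) y :=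
    (Real.hasDerivAt_log h).comp_hasFDerivAt y ha.hasFDerivAt
  rw [h2.fderiv]; simp

end helpers

set_option maxHeartbeats 2000000 in
theorem stmt_2 (d : ℕ) (hd : 1 ≤ d)
    (A π : EuclideanSpace ℝ (Fin d) → ℝ)
    (hA : ContDiff ℝ (⊤ : ℕ∞) A) (hπ : ContDiff ℝ (⊤ : ℕ∞) π) (hπpos : ∀ y, 0 < π y)
    (γ : EuclideanSpace ℝ (Fin d) → ℝ)
    (hγ : ∀ y, γ y = Real.exp (2 * A y))
    (κt : EuclideanSpace ℝ (Fin d) → ℝ)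
    (hκt : ∀ y, κt y =
      (1/2) * (lap π y / π y - 2 * gdot A π y / π y - 2 * lap A y))
    (f : EuclideanSpace ℝ (Fin d) → ℝ) (hf : ContDiff ℝ (⊤ : ℕ∞) f)
    (u : EuclideanSpace ℝ (Fin d) → ℝ)
    (hu : ∀ y, u y = (γ y / π y) * f y) :
    ∀ y, -(1/2) * lap f y - gdot A f y + κt y * f y =
      (π y / γ y) *
        (-(1/2) * lap u y
          - (1/2) * gdot (fun z => Real.log ((π z)^2 / γ z)) u y) := by
  have hγ' : γ = fun z => Real.exp (2 * A z) := funext hγ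
  subst hγ'
  have hπ0 : ∀ z, π z ≠ 0 := fun z => (hπpos z).ne'
  have hu' : u = fun z => Real.exp (2 * A z) / π z * f z := funext fun z => hu z
  subst hu'
  intro y
  -- smoothness
  have hN : ContDiff ℝ (⊤ : ℕ∞) (fun z => Real.exp (2 * A z)) :=
    Real.contDiff_exp.comp (contDiff_const.mul hA)
  have hG : ContDiff ℝ (⊤ : ℕ∞) (fun z => Real.exp (2 * A z) / π z) := hN.div hπ hπ0
  have hU : ContDiff ℝ (⊤ : ℕ∞) (fun z => Real.exp (2 * A z) / π z * f z) := hG.mul hf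
  have dA : ∀ z, DifferentiableAt ℝ A z := fun z => hA.differentiable (by simp) z
  have dπ : ∀ z, DifferentiableAt ℝ π z := fun z => hπ.differentiable (by simp) z
  have df : ∀ z, DifferentiableAt ℝ f z := fun z => hf.differentiable (by simp) z
  have dN : ∀ z, DifferentiableAt ℝ (fun w => Real.exp (2 * A w)) z :=
    fun z => hN.differentiable (by simp) z
  have dG : ∀ z, DifferentiableAt ℝ (fun w => Real.exp (2 * A w) / π w) z :=
    fun z => hG.differentiable (by simp) z
  have dpdA : ∀ i z, DifferentiableAt ℝ (pd A i) z :=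
    fun i z => (contDiff_pd hA i).differentiable (by simp) z
  have dpdπ : ∀ i z, DifferentiableAt ℝ (pd π i) z :=
    fun i z => (contDiff_pd hπ i).differentiable (by simp) z
  have dpdf : ∀ i z, DifferentiableAt ℝ (pd f i) z :=
    fun i z => (contDiff_pd hf i).differentiable (by simp) z
  have dpdG : ∀ i z, DifferentiableAt ℝ (pd (fun w => Real.exp (2 * A w) / π w) i) z :=
    fun i z => (contDiff_pd hG i).differentiable (by simp) z
  -- first derivatives
  have F1 : ∀ (i : Fin d) z, pd (fun w => Real.exp (2 * A w)) i z
      = Real.exp (2 * A z) * (2 * pd A i z) := by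
    intro i z
    rw [pd_exp ((dA z).const_mul 2), pd_const_mul 2 (dA z)]
  have F2 : ∀ (i : Fin d), pd (fun w => Real.exp (2 * A w) / π w) i
      = fun z => (Real.exp (2 * A z) * (2 * pd A i z) * π z
          - Real.exp (2 * A z) * pd π i z) / (π z)^2 := by
    intro i; funext z
    rw [pd_div (dN z) (dπ z) (hπ0 z), F1 i z]
  have F3 : ∀ (i : Fin d), pd (fun w => Real.exp (2 * A w) / π w * f w) i
      = fun z => pd (fun w => Real.exp (2 * A w) / π w) i z * f z
          + Real.exp (2 * A z) / π z * pd f i z := by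
    intro i; funext z
    exact pd_mul (dG z) (df z)
  have FU : ∀ (i : Fin d), pd (fun w => Real.exp (2 * A w) / π w * f w) i y
      = pd (fun w => Real.exp (2 * A w) / π w) i y * f y
          + Real.exp (2 * A y) / π y * pd f i y := fun i => congrFun (F3 i) y
  have hLeq : (fun z => Real.log ((π z)^2 / Real.exp (2 * A z)))
      = fun z => 2 * Real.log (π z) - 2 * A z := by
    funext z
    rw [Real.log_div (pow_ne_zero 2 (hπ0 z)) (Real.exp_ne_zero _), Real.log_pow, Real.log_exp]
    push_cast; ring
  have F7 : ∀ (i : Fin d), pd (fun z => 2 * Real.log (π z) - 2 * A z) i y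
      = 2 * ((π y)⁻¹ * pd π i y) - 2 * pd A i y := by
    intro i
    rw [pd_sub (((dπ y).log (hπ0 y)).const_mul 2) ((dA y).const_mul 2),
      pd_const_mul 2 ((dπ y).log (hπ0 y)), pd_const_mul 2 (dA y), pd_log (dπ y) (hπ0 y)]
  rw [hκt y]
  simp only [lap, gdot, hLeq]
  simp only [Finset.mul_sum, Finset.sum_div, mul_sub, sub_mul, mul_add, add_mul,
    neg_mul, mul_neg, Finset.sum_mul, neg_sub]
  simp only [← Finset.sum_sub_distrib, ← Finset.sum_add_distrib, ← Finset.sum_neg_distrib]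
  refine Finset.sum_congr rfl fun i _ => ?_
  have dM : ∀ z, DifferentiableAt ℝ
      (fun w => Real.exp (2 * A w) * (2 * pd A i w) * π w - Real.exp (2 * A w) * pd π i w) z :=
    fun z => (((dN z).mul ((dpdA i z).const_mul 2)).mul (dπ z)).sub ((dN z).mul (dpdπ i z))
  have dpow : ∀ z, DifferentiableAt ℝ (fun w => (π w)^2) z := fun z => (dπ z).pow 2
  have hpow0 : (π y)^2 ≠ 0 := pow_ne_zero 2 (hπ0 y)
  have e2 : (fun w => (π w)^2) = fun w => π w * π w := by funext w; ring
  have dQ : ∀ z, DifferentiableAt ℝ (fun w =>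
      (Real.exp (2 * A w) * (2 * pd A i w) * π w - Real.exp (2 * A w) * pd π i w) / (π w)^2) z :=
    fun z => diffAt_div (dM z) (dpow z) (pow_ne_zero 2 (hπ0 z))
  rw [F7 i, F3 i, F2 i]
  rw [pd_add ((dQ y).fun_mul (df y)) ((dG y).fun_mul (dpdf i y))]
  rw [pd_mul (dQ y) (df y)]
  rw [pd_div (dM y) (dpow y) hpow0]
  rw [pd_sub (((dN y).fun_mul ((dpdA i y).const_mul 2)).fun_mul (dπ y)) ((dN y).fun_mul (dpdπ i y))]
  rw [pd_mul ((dN y).fun_mul ((dpdA i y).const_mul 2)) (dπ y)]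
  rw [pd_mul (dN y) ((dpdA i y).const_mul 2)]
  rw [pd_mul (dN y) (dpdπ i y)]
  rw [pd_const_mul 2 (dpdA i y)]
  rw [e2, pd_mul (dπ y) (dπ y)]
  rw [pd_mul (dG y) (dpdf i y)]
  rw [F1 i y, F2 i]
  beta_reduce
  have hE0 : Real.exp (2 * A y) ≠ 0 := Real.exp_ne_zero _
  have hP0 := hπ0 y
  generalize Real.exp (2 * A y) = E at hE0 ⊢
  generalize π y = P at hP0 ⊢
  field_simp [hP0, hE0]
  ring
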